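/- arXiv:0705.2734 — 3 statements merged into one kernel-verified Lean document; each statement's English description precedes it below -/
import Mathlib

section
/- For all n ≥ 2, the generating polynomials D_n(x) = Σ_k D(n,k)x^k satisfy D_n(x) = x·(D_{n-1}'(x) + (n-1)·D_{n-2}(x)). -/
noncomputable def partD (n k : ℕ) : ℕ :=
  Nat.card {P : Finpartition (Finset.univ : Finset (Fin n)) //
    P.parts.card = k ∧ ∀ b ∈ P.parts, 2 ≤ b.card}

noncomputable def Dpoly (n : ℕ) : Polynomial ℝ :=
  ∑ k ∈ Finset.range (n + 1), Polynomial.C (partD n k : ℝ) * Polynomial.X ^ k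

/-!
Delete the point `a` from a partition of `insert a s` into `k + 1` blocks of size at least two.
If the block of `a` has at least three elements, what remains is such a partition of `s` with
`k + 1` blocks, and `a` can be put back into any of them; if the block of `a` is a pair `{a, j}`,
what remains is such a partition of `s \ {j}` into `k` blocks. Hence
`D(n + 2, k + 1) = (k + 1) D(n + 1, k + 1) + (n + 1) D(n, k)`, which is the recurrence read
coefficientwise. The same recursion shows that the count only depends on `#s`.
-/

open Finset

lemma Finset.sum_eq_sum_of_card_eq {ι κ M : Type*} [AddCommMonoid M] {s : Finset ι}
    {t : Finset κ} (h : #s = #t) {f : ι → M} {g : κ → M} (hfg : ∀ i ∈ s, ∀ j ∈ t, f i = g j) :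
    ∑ i ∈ s, f i = ∑ j ∈ t, g j := by
  rcases s.eq_empty_or_nonempty with rfl | ⟨i, hi⟩
  · rw [card_eq_zero.1 (h.symm.trans card_empty), sum_empty, sum_empty]
  obtain ⟨j, hj⟩ : t.Nonempty := card_pos.1 (h ▸ card_pos.2 ⟨i, hi⟩)
  rw [sum_eq_card_nsmul fun x hx => hfg x hx j hj,
    sum_eq_card_nsmul fun y hy => (hfg i hi y hy).symm.trans (hfg i hi j hj), h]

namespace Finpartition

section GeneralizedBooleanAlgebra

variable {α : Type*} [GeneralizedBooleanAlgebra α] [DecidableEq α] {a b : α}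

lemma parts_avoid_of_mem (P : Finpartition a) (hb : b ∈ P.parts) :
    (P.avoid b).parts = P.parts.erase b := by
  ext c
  rw [mem_avoid, mem_erase]
  constructor
  · rintro ⟨d, hd, hdb, rfl⟩
    have hne : d ≠ b := by rintro rfl; exact hdb le_rfl
    have hdisj : Disjoint d b := P.disjoint hd hb hne
    rw [hdisj.sdiff_eq_left]
    exact ⟨hne, hd⟩
  · rintro ⟨hne, hc⟩
    exact ⟨c, hc, fun hle => P.ne_bot hc ((P.disjoint hc hb hne).eq_bot_of_le hle),
      (P.disjoint hc hb hne).sdiff_eq_left⟩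

end GeneralizedBooleanAlgebra

variable {α : Type*} [DecidableEq α] {s : Finset α} {a j : α} {b : Finset α} {k : ℕ}

def singletonFree (s : Finset α) (k : ℕ) : Finset (Finpartition s) :=
  {P | #P.parts = k ∧ ∀ b ∈ P.parts, 2 ≤ #b}

@[simp]
lemma mem_singletonFree {P : Finpartition s} :
    P ∈ singletonFree s k ↔ #P.parts = k ∧ ∀ b ∈ P.parts, 2 ≤ #b := by
  simp [singletonFree]

lemma card_singletonFree_empty (k : ℕ) :
    #(singletonFree (∅ : Finset α) k) = if k = 0 then 1 else 0 := by
  have huniv : (univ : Finset (Finpartition (∅ : Finset α))) = {Finpartition.empty _} :=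
    eq_singleton_iff_unique_mem.2
      ⟨mem_univ _, fun P _ => Finpartition.ext (parts_eq_empty_iff.2 rfl)⟩
  rw [singletonFree, huniv]
  split_ifs with hk
  · simp [filter_singleton, hk, Finpartition.empty]
  · simp [filter_singleton, Finpartition.empty]
    omega

lemma singletonFree_zero_of_nonempty (hs : s.Nonempty) : singletonFree s 0 = ∅ := by
  ext P
  simp only [mem_singletonFree, card_eq_zero, parts_eq_empty_iff, notMem_empty, iff_false]
  exact fun h => hs.ne_empty h.1

lemma singletonFree_eq_empty_of_card_lt (h : #s < k) : singletonFree s k = ∅ := by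
  refine eq_empty_of_forall_notMem fun P hP => ?_
  have := P.card_parts_le_card
  rw [(mem_singletonFree.1 hP).1] at this
  omega

def erasePoint (P : Finpartition (insert a s)) (ha : a ∉ s) : Finpartition s :=
  (P.avoid {a}).copy (by rw [sdiff_singleton_eq_erase, erase_insert ha])

lemma parts_erasePoint (P : Finpartition (insert a s)) (ha : a ∉ s) (h : 2 ≤ #(P.part a)) :
    (P.erasePoint ha).parts = insert ((P.part a).erase a) (P.parts.erase (P.part a)) := by
  have hpa : P.part a ∈ P.parts := P.part_mem.2 (mem_insert_self a s)
  ext c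
  simp only [erasePoint, copy_parts, mem_avoid, mem_insert, mem_erase, sdiff_singleton_eq_erase]
  constructor
  · rintro ⟨d, hd, -, rfl⟩
    by_cases had : a ∈ d
    · exact .inl (by rw [P.part_eq_of_mem hd had])
    · rw [erase_eq_of_notMem had]
      exact .inr ⟨fun h => had (h ▸ P.mem_part (mem_insert_self a s)), hd⟩
  · rintro (rfl | ⟨hne, hc⟩)
    · refine ⟨P.part a, hpa, fun hle => ?_, rfl⟩
      have := card_le_card hle
      rw [card_singleton] at this
      omega
    · have hac : a ∉ c := fun hac => hne (P.part_eq_of_mem hc hac).symm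
      refine ⟨c, hc, fun hle => ?_, erase_eq_of_notMem hac⟩
      obtain rfl | rfl := subset_singleton_iff.1 hle
      · exact P.ne_bot hc rfl
      · exact hac (mem_singleton_self a)

def insertIntoPart (Q : Finpartition s) (hb : b ∈ Q.parts) (ha : a ∉ s) :
    Finpartition (insert a s) :=
  (Q.avoid b).extend (b := insert a b) (insert_ne_empty a b)
    (disjoint_insert_right.2 ⟨fun h => ha (mem_sdiff.1 h).1, sdiff_disjoint⟩)
    (by rw [sup_eq_union, union_insert, sdiff_union_of_subset (Q.le hb)])

lemma parts_insertIntoPart (Q : Finpartition s) (hb : b ∈ Q.parts) (ha : a ∉ s) :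
    (Q.insertIntoPart hb ha).parts = insert (insert a b) (Q.parts.erase b) := by
  rw [insertIntoPart, extend_parts, parts_avoid_of_mem Q hb]

lemma part_insertIntoPart (Q : Finpartition s) (hb : b ∈ Q.parts) (ha : a ∉ s) :
    (Q.insertIntoPart hb ha).part a = insert a b :=
  part_eq_of_mem _ (by rw [parts_insertIntoPart]; exact mem_insert_self _ _) (mem_insert_self a b)

def insertPair (Q : Finpartition (s.erase j)) (hj : j ∈ s) (ha : a ∉ s) :
    Finpartition (insert a s) :=
  Q.extend (b := {a, j}) (insert_ne_empty a {j})
    (by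
      rw [disjoint_insert_right, disjoint_singleton_right]
      exact ⟨fun h => ha (mem_of_mem_erase h), notMem_erase j s⟩)
    (by rw [sup_eq_union, union_insert, union_singleton, insert_erase hj])

lemma parts_insertPair (Q : Finpartition (s.erase j)) (hj : j ∈ s) (ha : a ∉ s) :
    (Q.insertPair hj ha).parts = insert {a, j} Q.parts :=
  rfl

lemma two_le_card_part {t : Finset α} {P : Finpartition t} (hP : P ∈ singletonFree t k)
    (ha : a ∈ t) : 2 ≤ #(P.part a) :=
  (mem_singletonFree.1 hP).2 _ (P.part_mem.2 ha)

lemma erase_part_notMem_parts {t : Finset α} (P : Finpartition t) (h : 2 ≤ #(P.part a)) :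
    (P.part a).erase a ∉ P.parts := by
  intro hmem
  have ha : a ∈ P.part a := P.mem_part (P.part_nonempty.1 (card_pos.1 (by omega)))
  obtain ⟨x, hx⟩ : ((P.part a).erase a).Nonempty := by
    rw [← card_pos, card_erase_of_mem ha]
    omega
  have heq := P.eq_of_mem_parts hmem (P.part_mem.2 (P.mem_part_self.1 ha)) hx (mem_of_mem_erase hx)
  exact notMem_erase a _ (heq ▸ ha)

lemma erasePoint_mem_singletonFree {P : Finpartition (insert a s)} (ha : a ∉ s)
    (hP : P ∈ singletonFree (insert a s) k) (h3 : 3 ≤ #(P.part a)) :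
    P.erasePoint ha ∈ singletonFree s k := by
  obtain ⟨hk, hP2⟩ := mem_singletonFree.1 hP
  have hpa : P.part a ∈ P.parts := P.part_mem.2 (mem_insert_self a s)
  rw [mem_singletonFree, parts_erasePoint P ha (by omega),
    card_insert_of_notMem fun h => erase_part_notMem_parts P (by omega) (mem_of_mem_erase h),
    card_erase_add_one hpa, forall_mem_insert,
    card_erase_of_mem (P.mem_part (mem_insert_self a s))]
  exact ⟨hk, by omega, fun c hc => hP2 c (mem_of_mem_erase hc)⟩

lemma erase_part_mem_parts_erasePoint (P : Finpartition (insert a s)) (ha : a ∉ s)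
    (h : 2 ≤ #(P.part a)) : (P.part a).erase a ∈ (P.erasePoint ha).parts := by
  rw [parts_erasePoint P ha h]
  exact mem_insert_self _ _

lemma insertIntoPart_mem_singletonFree {Q : Finpartition s} (hQ : Q ∈ singletonFree s k)
    (hb : b ∈ Q.parts) (ha : a ∉ s) : Q.insertIntoPart hb ha ∈ singletonFree (insert a s) k := by
  obtain ⟨hk, hQ2⟩ := mem_singletonFree.1 hQ
  have hab : a ∉ b := fun h => ha (Q.le hb h)
  rw [mem_singletonFree, parts_insertIntoPart,
    card_insert_of_notMem fun h => ha (Q.le (mem_of_mem_erase h) (mem_insert_self a b)),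
    card_erase_add_one hb, forall_mem_insert, card_insert_of_notMem hab]
  exact ⟨hk, by have := hQ2 b hb; omega, fun c hc => hQ2 c (mem_of_mem_erase hc)⟩

lemma three_le_card_part_insertIntoPart {Q : Finpartition s} (hQ : Q ∈ singletonFree s k)
    (hb : b ∈ Q.parts) (ha : a ∉ s) : 3 ≤ #((Q.insertIntoPart hb ha).part a) := by
  rw [part_insertIntoPart, card_insert_of_notMem fun h => ha (Q.le hb h)]
  have := (mem_singletonFree.1 hQ).2 b hb
  omega

lemma insertIntoPart_erasePoint (P : Finpartition (insert a s)) (ha : a ∉ s)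
    (h : 2 ≤ #(P.part a)) :
    (P.erasePoint ha).insertIntoPart (erase_part_mem_parts_erasePoint P ha h) ha = P := by
  ext1
  rw [parts_insertIntoPart, parts_erasePoint P ha h,
    erase_insert fun h' => erase_part_notMem_parts P h (mem_of_mem_erase h'),
    insert_erase (P.mem_part (mem_insert_self a s)),
    insert_erase (P.part_mem.2 (mem_insert_self a s))]

lemma erasePoint_insertIntoPart (Q : Finpartition s) (hb : b ∈ Q.parts) (ha : a ∉ s) :
    (Q.insertIntoPart hb ha).erasePoint ha = Q := by
  have hab : a ∉ b := fun h => ha (Q.le hb h)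
  have h2 : 2 ≤ #((Q.insertIntoPart hb ha).part a) := by
    rw [part_insertIntoPart, card_insert_of_notMem hab]
    have := card_pos.2 (Q.nonempty_of_mem_parts hb)
    omega
  ext1
  rw [parts_erasePoint _ ha h2, part_insertIntoPart, parts_insertIntoPart, erase_insert hab,
    erase_insert fun h => ha (Q.le (mem_of_mem_erase h) (mem_insert_self a b)), insert_erase hb]

lemma card_filter_card_part_ne_two (ha : a ∉ s) (k : ℕ) :
    #{P ∈ singletonFree (insert a s) k | #(P.part a) ≠ 2} = k * #(singletonFree s k) := by
  calc _ = #((singletonFree s k).sigma fun Q => Q.parts) := by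
        refine card_bij' (fun P _ => ⟨P.erasePoint ha, (P.part a).erase a⟩)
          (fun x hx => x.1.insertIntoPart (mem_sigma.1 hx).2 ha) ?_ ?_ ?_ ?_
        · intro P hP
          obtain ⟨hP, hne⟩ := mem_filter.1 hP
          have h2 := two_le_card_part hP (mem_insert_self a s)
          exact mem_sigma.2 ⟨erasePoint_mem_singletonFree ha hP (by omega),
            erase_part_mem_parts_erasePoint P ha h2⟩
        · rintro ⟨Q, b⟩ hx
          obtain ⟨hQ, hb⟩ := mem_sigma.1 hx
          have := three_le_card_part_insertIntoPart hQ hb ha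
          exact mem_filter.2 ⟨insertIntoPart_mem_singletonFree hQ hb ha, by omega⟩
        · intro P hP
          exact insertIntoPart_erasePoint P ha
            (two_le_card_part (mem_filter.1 hP).1 (mem_insert_self a s))
        · rintro ⟨Q, b⟩ hx
          obtain ⟨hQ, hb⟩ := mem_sigma.1 hx
          refine Sigma.ext (erasePoint_insertIntoPart Q hb ha) (heq_of_eq ?_)
          rw [part_insertIntoPart, erase_insert fun h => ha (Q.le hb h)]
    _ = k * #(singletonFree s k) := by
      rw [card_sigma, sum_const_nat fun Q hQ => (mem_singletonFree.1 hQ).1, mul_comm]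

lemma card_filter_part_eq_pair (ha : a ∉ s) (hj : j ∈ s) (k : ℕ) :
    #{P ∈ singletonFree (insert a s) (k + 1) | P.part a = {a, j}} =
      #(singletonFree (s.erase j) k) := by
  have hsdiff : insert a s \ {a, j} = s.erase j := by
    ext x
    by_cases hx : x = a <;> simp_all [and_comm]
  have hpair {Q : Finpartition (s.erase j)} : {a, j} ∉ Q.parts := fun h =>
    ha (mem_of_mem_erase (Q.le h (mem_insert_self a {j})))
  have hpair_mem {P : Finpartition (insert a s)} (h : P.part a = {a, j}) : {a, j} ∈ P.parts :=
    h ▸ P.part_mem.2 (mem_insert_self a s)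
  symm
  refine card_nbij' (fun Q => Q.insertPair hj ha) (fun P => (P.avoid {a, j}).copy hsdiff)
    ?_ ?_ ?_ ?_
  · intro Q hQ
    obtain ⟨hk, hQ2⟩ := mem_singletonFree.1 hQ
    refine mem_filter.2 ⟨mem_singletonFree.2 ⟨?_, ?_⟩, ?_⟩
    · rw [parts_insertPair, card_insert_of_notMem hpair, hk]
    · rw [parts_insertPair, forall_mem_insert, card_pair fun h : a = j => ha (h ▸ hj)]
      exact ⟨le_rfl, hQ2⟩
    · exact part_eq_of_mem _ (by rw [parts_insertPair]; exact mem_insert_self _ _)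
        (mem_insert_self a {j})
  · intro P hP
    obtain ⟨hP, hpart⟩ := mem_filter.1 hP
    obtain ⟨hk, hP2⟩ := mem_singletonFree.1 hP
    rw [mem_coe, mem_singletonFree, copy_parts, parts_avoid_of_mem P (hpair_mem hpart),
      card_erase_of_mem (hpair_mem hpart), hk]
    exact ⟨rfl, fun c hc => hP2 c (mem_of_mem_erase hc)⟩
  · intro Q _
    ext1
    rw [copy_parts, parts_avoid_of_mem _ (mem_insert_self _ _), parts_insertPair,
      erase_insert hpair]
  · intro P hP
    have hmem := hpair_mem (mem_filter.1 hP).2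
    ext1
    rw [parts_insertPair, copy_parts, parts_avoid_of_mem P hmem, insert_erase hmem]

lemma card_filter_card_part_eq_two (ha : a ∉ s) (k : ℕ) :
    #{P ∈ singletonFree (insert a s) (k + 1) | #(P.part a) = 2} =
      ∑ j ∈ s, #(singletonFree (s.erase j) k) := by
  have hne {j : α} (hj : j ∈ s) : a ≠ j := fun h => ha (h ▸ hj)
  rw [card_eq_sum_card_fiberwise (f := fun P => P.part a) (t := s.image fun j => {a, j}) ?_,
    sum_image ?_]
  · refine sum_congr rfl fun j hj => ?_
    rw [filter_filter, ← card_filter_part_eq_pair ha hj k]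
    congr 1
    exact filter_congr fun P _ => and_iff_right_of_imp fun h => by rw [h, card_pair (hne hj)]
  · intro j hj j' _ h
    have : j ∈ ({a, j'} : Finset α) := by
      rw [← show ({a, j} : Finset α) = {a, j'} from h]
      exact mem_insert_of_mem (mem_singleton_self j)
    rcases mem_insert.1 this with h' | h'
    · exact absurd h'.symm (hne hj)
    · exact mem_singleton.1 h'
  · intro P hP
    have ha' : a ∈ P.part a := P.mem_part (mem_insert_self a s)
    obtain ⟨j, hj⟩ := card_eq_one.1
      (by rw [card_erase_of_mem ha', (mem_filter.1 hP).2] : #((P.part a).erase a) = 1)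
    have hjs : j ∈ s := by
      obtain ⟨hja, hjP⟩ := mem_erase.1 (hj ▸ mem_singleton_self j)
      exact (mem_insert.1 (P.part_subset a hjP)).resolve_left hja
    exact mem_image.2 ⟨j, hjs, by rw [← hj, insert_erase ha']⟩

theorem card_singletonFree_insert (ha : a ∉ s) (k : ℕ) :
    #(singletonFree (insert a s) (k + 1)) =
      (k + 1) * #(singletonFree s (k + 1)) + ∑ j ∈ s, #(singletonFree (s.erase j) k) := by
  rw [← card_filter_add_card_filter_not (fun P => #(P.part a) = 2),
    card_filter_card_part_eq_two ha, card_filter_card_part_ne_two ha, add_comm]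

theorem card_singletonFree_congr {β : Type*} [DecidableEq β] {s : Finset α} {t : Finset β}
    (h : #s = #t) (k : ℕ) : #(singletonFree s k) = #(singletonFree t k) := by
  induction hn : #s using Nat.strong_induction_on generalizing s t k with
  | _ n ih =>
  rcases s.eq_empty_or_nonempty with rfl | ⟨a, ha⟩
  · obtain rfl : t = ∅ := card_eq_zero.1 (h.symm.trans card_empty)
    rw [card_singletonFree_empty, card_singletonFree_empty]
  obtain ⟨b, hb⟩ : t.Nonempty := card_pos.1 (h ▸ card_pos.2 ⟨a, ha⟩)
  rcases k with _ | k
  · rw [singletonFree_zero_of_nonempty ⟨a, ha⟩, singletonFree_zero_of_nonempty ⟨b, hb⟩,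
      card_empty, card_empty]
  have herase : #(s.erase a) = #(t.erase b) := by
    rw [card_erase_of_mem ha, card_erase_of_mem hb, h]
  have hlt : #(s.erase a) < n := hn ▸ card_erase_lt_of_mem ha
  rw [← insert_erase ha, ← insert_erase hb, card_singletonFree_insert (notMem_erase a s),
    card_singletonFree_insert (notMem_erase b t), ih _ hlt herase (k + 1) rfl]
  congr 1
  refine sum_eq_sum_of_card_eq herase fun i hi j hj => ?_
  refine ih _ ((card_erase_lt_of_mem hi).trans hlt) ?_ k rfl
  rw [card_erase_of_mem hi, card_erase_of_mem hj, herase]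

end Finpartition

lemma partD_eq_card_singletonFree (n k : ℕ) :
    partD n k = #(Finpartition.singletonFree (univ : Finset (Fin n)) k) := by
  rw [partD, Nat.card_eq_fintype_card, Fintype.card_subtype]
  congr

lemma partD_zero {n : ℕ} (hn : n ≠ 0) : partD n 0 = 0 := by
  rw [partD_eq_card_singletonFree,
    Finpartition.singletonFree_zero_of_nonempty ⟨⟨0, Nat.pos_of_ne_zero hn⟩, mem_univ _⟩,
    card_empty]

lemma partD_eq_zero_of_lt {n k : ℕ} (h : n < k) : partD n k = 0 := by
  rw [partD_eq_card_singletonFree, Finpartition.singletonFree_eq_empty_of_card_lt (by simpa),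
    card_empty]

lemma partD_succ_succ (m k : ℕ) :
    partD (m + 2) (k + 1) = (k + 1) * partD (m + 1) (k + 1) + (m + 1) * partD m k := by
  have hcard : #(univ.erase (0 : Fin (m + 2))) = m + 1 := by simp
  rw [partD_eq_card_singletonFree, ← insert_erase (mem_univ 0),
    Finpartition.card_singletonFree_insert (notMem_erase 0 univ), partD_eq_card_singletonFree,
    Finpartition.card_singletonFree_congr (t := (univ : Finset (Fin (m + 1)))) (by simp),
    sum_const_nat fun j hj => ?_, hcard, partD_eq_card_singletonFree]
  exact Finpartition.card_singletonFree_congr (by rw [card_erase_of_mem hj, hcard]; simp) k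

lemma coeff_Dpoly (n m : ℕ) : (Dpoly n).coeff m = partD n m := by
  rw [Dpoly, Polynomial.finsetSum_coeff]
  simp only [Polynomial.coeff_C_mul, Polynomial.coeff_X_pow, mul_ite, mul_one, mul_zero,
    sum_ite_eq, mem_range]
  split_ifs with h
  · rfl
  · rw [partD_eq_zero_of_lt (by omega), Nat.cast_zero]

theorem Dpoly_recurrence (n : ℕ) (hn : 2 ≤ n) :
    Dpoly n = Polynomial.X *
      (Polynomial.derivative (Dpoly (n - 1)) +
        Polynomial.C ((n : ℝ) - 1) * Dpoly (n - 2)) := by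
  obtain ⟨m, rfl⟩ : ∃ m, n = m + 2 := ⟨n - 2, by omega⟩
  simp only [Nat.add_sub_cancel, show m + 2 - 1 = m + 1 by omega]
  ext (_ | k)
  · simp [coeff_Dpoly, partD_zero]
  · rw [Polynomial.coeff_X_mul, Polynomial.coeff_add, Polynomial.coeff_derivative,
      Polynomial.coeff_C_mul, coeff_Dpoly, coeff_Dpoly, coeff_Dpoly, partD_succ_succ]
    push_cast
    ring
end

section
/- For all positive integers n, B(n) = D(n) + D(n+1), where B(n) is the n-th Bell number and D(m) is the number of partitions of {1,...,m} with no singleton blocks. -/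
noncomputable def partDtot (n : ℕ) : ℕ :=
  Nat.card {P : Finpartition (Finset.univ : Finset (Fin n)) //
    ∀ b ∈ P.parts, 2 ≤ b.card}

noncomputable def bell (n : ℕ) : ℕ :=
  Nat.card (Finpartition (Finset.univ : Finset (Fin n)))

/-!
Split the partitions of `{1, …, n}` according to whether they have a singleton block; those
without one are counted by `D n`. Those with one correspond bijectively to the singleton-free
partitions of `{1, …, n + 1}`: merge all singleton blocks, together with the new point `n + 1`,
into a single block. Conversely, the block of `n + 1` has another element, and breaking it up into
singletons recovers the original partition.
-/

open Finset

namespace Setoid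

variable {α β : Type*}

def IsIsolated (s : Setoid α) (a : α) : Prop := ∀ b, s a b → b = a

lemma IsIsolated.of_rel {s : Setoid α} {a b : α} (ha : s.IsIsolated a) (hab : s a b) :
    s.IsIsolated b := by
  obtain rfl := ha b hab
  exact ha

instance [Finite α] : Finite (Setoid α) :=
  Finite.of_injective (fun s : Setoid α => ⇑s) fun _ _ h =>
    Setoid.ext fun a b => iff_of_eq (congrFun₂ h a b)

def congr (e : α ≃ β) : Setoid α ≃ Setoid β where
  toFun := comap e.symm
  invFun := comap e
  left_inv s := by ext; simp [comap_rel]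
  right_inv t := by ext; simp [comap_rel]

lemma isIsolated_comap_iff (e : α ≃ β) {s : Setoid β} {a : α} :
    (s.comap e).IsIsolated a ↔ s.IsIsolated (e a) := by
  simp only [IsIsolated, comap_rel]
  exact e.forall_congr fun b => by rw [e.apply_eq_iff_eq]

lemma card_forall_not_isIsolated_congr (e : α ≃ β) :
    Nat.card {s : Setoid α // ∀ a, ¬ s.IsIsolated a} =
      Nat.card {t : Setoid β // ∀ b, ¬ t.IsIsolated b} :=
  Nat.card_congr <| (congr e).subtypeEquiv fun s => by
    simp only [congr, Equiv.coe_fn_mk, isIsolated_comap_iff, e.symm.forall_congr_left,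
      Equiv.symm_symm, Equiv.symm_apply_apply]

open Classical in
/-- The classes of `s` that are singletons are merged with the new point `none`. -/
noncomputable def mergeIsolated (s : Setoid α) : Setoid (Option α) :=
  ker fun x : Option α => x.bind fun a => if s.IsIsolated a then none else some (Quotient.mk s a)

open Classical in
/-- The class of `none` is split into singletons, and `none` is dropped. -/
noncomputable def splitNone (t : Setoid (Option α)) : Setoid α :=
  ker fun a => if t (some a) none then Sum.inl a else Sum.inr (Quotient.mk t (some a))

@[simp]
lemma mergeIsolated_none_none (s : Setoid α) : s.mergeIsolated none none := rfl

@[simp]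
lemma mergeIsolated_some_none {s : Setoid α} {a : α} :
    s.mergeIsolated (some a) none ↔ s.IsIsolated a := by
  rw [mergeIsolated, ker_def]
  simp

@[simp]
lemma mergeIsolated_some_some {s : Setoid α} {a b : α} :
    s.mergeIsolated (some a) (some b) ↔ s.IsIsolated a ∧ s.IsIsolated b ∨ s a b := by
  rw [mergeIsolated, ker_def, Option.bind_some, Option.bind_some]
  by_cases ha : s.IsIsolated a <;> by_cases hb : s.IsIsolated b <;> simp [ha, hb, Quotient.eq]
  · exact fun h => hb (ha.of_rel h)
  · exact fun h => ha (hb.of_rel (s.symm h))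

lemma splitNone_iff {t : Setoid (Option α)} {a b : α} :
    t.splitNone a b ↔ a = b ∨ ¬ t (some a) none ∧ t (some a) (some b) := by
  rw [splitNone, ker_def]
  by_cases ha : t (some a) none <;> by_cases hb : t (some b) none <;> simp [ha, hb, Quotient.eq]
  · rintro rfl
    exact hb ha
  · exact ⟨by rintro rfl; exact ha hb, fun h => ha (t.trans h hb)⟩
  · rintro rfl
    exact t.refl _

lemma splitNone_mergeIsolated (s : Setoid α) : s.mergeIsolated.splitNone = s := by
  ext a b
  rw [splitNone_iff, mergeIsolated_some_none, mergeIsolated_some_some]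
  constructor
  · rintro (rfl | ⟨ha, ⟨ha', -⟩ | h⟩)
    · exact s.refl a
    · exact absurd ha' ha
    · exact h
  · intro h
    by_cases ha : s.IsIsolated a
    · exact Or.inl (ha b h).symm
    · exact Or.inr ⟨ha, Or.inr h⟩

lemma isIsolated_splitNone_iff {t : Setoid (Option α)} (ht : ∀ x, ¬ t.IsIsolated x) {a : α} :
    t.splitNone.IsIsolated a ↔ t (some a) none := by
  refine ⟨fun h => ?_, fun h b hb => ?_⟩
  · by_contra hn
    obtain ⟨_ | b, hb, hne⟩ : ∃ y, t (some a) y ∧ y ≠ some a := by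
      simpa [IsIsolated] using ht (some a)
    · exact hn hb
    · exact hne (congrArg some (h b (splitNone_iff.2 (Or.inr ⟨hn, hb⟩))))
  · rcases splitNone_iff.1 hb with rfl | ⟨hn, -⟩
    · rfl
    · exact absurd h hn

lemma mergeIsolated_splitNone {t : Setoid (Option α)} (ht : ∀ x, ¬ t.IsIsolated x) :
    t.splitNone.mergeIsolated = t := by
  ext (_ | a) (_ | b)
  · exact iff_of_true (mergeIsolated_none_none _) (t.refl none)
  · rw [Setoid.comm', t.comm', mergeIsolated_some_none, isIsolated_splitNone_iff ht]
  · rw [mergeIsolated_some_none, isIsolated_splitNone_iff ht]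
  · rw [mergeIsolated_some_some, isIsolated_splitNone_iff ht, isIsolated_splitNone_iff ht,
      splitNone_iff]
    constructor
    · rintro (⟨ha, hb⟩ | rfl | ⟨-, h⟩)
      · exact t.trans ha (t.symm hb)
      · exact t.refl _
      · exact h
    · intro h
      by_cases ha : t (some a) none
      · exact Or.inl ⟨ha, t.trans (t.symm h) ha⟩
      · exact Or.inr (Or.inr ⟨ha, h⟩)

lemma not_isIsolated_mergeIsolated {s : Setoid α} (hs : ∃ a, s.IsIsolated a) (x : Option α) :
    ¬ s.mergeIsolated.IsIsolated x := by
  intro hx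
  rcases x with _ | a
  · obtain ⟨a, ha⟩ := hs
    exact Option.some_ne_none a (hx (some a) ((Setoid.comm' _).1 (mergeIsolated_some_none.2 ha)))
  · by_cases ha : s.IsIsolated a
    · exact Option.some_ne_none a (hx none (mergeIsolated_some_none.2 ha)).symm
    · obtain ⟨b, hab, hba⟩ : ∃ b, s a b ∧ b ≠ a := by simpa [IsIsolated] using ha
      exact hba (Option.some_injective _ (hx (some b) (mergeIsolated_some_some.2 (Or.inr hab))))

lemma exists_isIsolated_splitNone {t : Setoid (Option α)} (ht : ∀ x, ¬ t.IsIsolated x) :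
    ∃ a, t.splitNone.IsIsolated a := by
  obtain ⟨_ | a, ha, hne⟩ : ∃ y, t none y ∧ y ≠ none := by simpa [IsIsolated] using ht none
  · exact absurd rfl hne
  · exact ⟨a, (isIsolated_splitNone_iff ht).2 (t.symm ha)⟩

noncomputable def isolatedEquiv :
    {s : Setoid α // ∃ a, s.IsIsolated a} ≃ {t : Setoid (Option α) // ∀ x, ¬ t.IsIsolated x} where
  toFun s := ⟨s.1.mergeIsolated, not_isIsolated_mergeIsolated s.2⟩
  invFun t := ⟨t.1.splitNone, exists_isIsolated_splitNone t.2⟩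
  left_inv s := Subtype.ext (splitNone_mergeIsolated s.1)
  right_inv t := Subtype.ext (mergeIsolated_splitNone t.2)

end Setoid

namespace Finpartition

variable {α : Type*} [DecidableEq α]

lemma ext_part {s : Finset α} {P Q : Finpartition s} (h : ∀ a, P.part a = Q.part a) : P = Q := by
  have key : ∀ {P Q : Finpartition s}, (∀ a, P.part a = Q.part a) → P.parts ⊆ Q.parts := by
    intro P Q h t ht
    obtain ⟨a, ha, rfl⟩ := P.part_surjOn ht
    exact h a ▸ Q.part_mem.2 ha
  exact Finpartition.ext (key h |>.antisymm (key fun a => (h a).symm))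

variable [Fintype α]

lemma ker_part_iff (P : Finpartition (univ : Finset α)) {a b : α} :
    Setoid.ker P.part a b ↔ b ∈ P.part a := by
  rw [Setoid.ker_def, eq_comm, P.mem_part_iff_part_eq_part (mem_univ b) (mem_univ a)]

open Classical in
noncomputable def equivSetoid : Finpartition (univ : Finset α) ≃ Setoid α where
  toFun P := Setoid.ker P.part
  invFun s := ofSetoid s
  left_inv P := ext_part fun a => by ext b; rw [mem_part_ofSetoid_iff_rel, ker_part_iff]
  right_inv s := by ext a b; rw [ker_part_iff, mem_part_ofSetoid_iff_rel]

@[simp]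
lemma equivSetoid_apply (P : Finpartition (univ : Finset α)) : equivSetoid P = Setoid.ker P.part :=
  rfl

lemma forall_two_le_card_parts_iff (P : Finpartition (univ : Finset α)) :
    (∀ t ∈ P.parts, 2 ≤ #t) ↔ ∀ a, ¬ (equivSetoid P).IsIsolated a := by
  constructor
  · intro h a ha
    obtain ⟨b, hb, hba⟩ := exists_mem_ne (h _ (P.part_mem.2 (mem_univ a))) a
    exact hba (ha b ((ker_part_iff P).2 hb))
  · intro h t ht
    obtain ⟨a, ha⟩ := P.nonempty_of_mem_parts ht
    by_contra! hlt
    refine h a fun b hb => ?_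
    rw [equivSetoid_apply, ker_part_iff, P.part_eq_of_mem ht ha] at hb
    exact card_le_one.1 (by omega) b hb a ha

end Finpartition

lemma partDtot_eq_card_setoid (n : ℕ) :
    partDtot n = Nat.card {s : Setoid (Fin n) // ∀ a, ¬ s.IsIsolated a} :=
  Nat.card_congr (Finpartition.equivSetoid.subtypeEquiv Finpartition.forall_two_le_card_parts_iff)

theorem bell_eq_partDtot_add_general (n : ℕ) :
    bell n = partDtot n + partDtot (n + 1) := by
  classical
  have hsplit : bell n = Nat.card {s : Setoid (Fin n) // ∃ a, s.IsIsolated a} +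
      Nat.card {s : Setoid (Fin n) // ¬ ∃ a, s.IsIsolated a} := by
    rw [bell, Nat.card_congr Finpartition.equivSetoid, ← Nat.card_sum,
      Nat.card_congr (Equiv.sumCompl _)]
  have hmerge : Nat.card {s : Setoid (Fin n) // ∃ a, s.IsIsolated a} = partDtot (n + 1) := by
    rw [partDtot_eq_card_setoid, Nat.card_congr Setoid.isolatedEquiv,
      Setoid.card_forall_not_isIsolated_congr (finSuccEquiv n).symm]
  simp only [hsplit, hmerge, partDtot_eq_card_setoid, not_exists, add_comm]

theorem bell_eq_partDtot_add (n : ℕ) (hn : 1 ≤ n) :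
    bell n = partDtot n + partDtot (n + 1) :=
  bell_eq_partDtot_add_general n
end

section
/- For every prime p and every integer k with 1 < k < p, p divides D(p,k). -/
/-!
The cyclic group of order `p` acts on the partitions of `ℤ/p` by translation, preserving the
number and the sizes of the blocks. In a partition fixed by this action, the stabilizer of a block
is trivial or everything: in the first case the `p` translates of the block are distinct blocks,
so there are at least `p` blocks; in the second the block is all of `ℤ/p`, so there is only one.
For `1 < k < p` the action therefore has no fixed points, so by the fixed-point congruence for
`p`-groups the number of partitions is divisible by `p`.
-/

open Finset MulAction
open scoped Pointwise

instance Multiplicative.isPretransitive {G α : Type*} [AddGroup G] [AddAction G α]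
    [AddAction.IsPretransitive G α] : IsPretransitive (Multiplicative G) α :=
  ⟨fun x y => AddAction.exists_vadd_eq G x y⟩

def OrderIso.smulFinset {G α : Type*} [Group G] [MulAction G α] [DecidableEq α] (g : G) :
    Finset α ≃o Finset α where
  toFun s := g • s
  invFun s := g⁻¹ • s
  left_inv s := inv_smul_smul g s
  right_inv s := smul_inv_smul g s
  map_rel_iff' := smul_finset_subset_smul_finset_iff

namespace Finpartition

theorem parts_eq_singleton_of_mem {α : Type*} [Lattice α] [OrderBot α] {a : α}
    {P : Finpartition a} (h : a ∈ P.parts) : P.parts = {a} := by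
  refine eq_singleton_iff_unique_mem.2 ⟨h, fun b hb => ?_⟩
  by_contra hba
  exact P.ne_bot hb ((P.disjoint hb h hba).eq_bot_of_le (P.le hb))

variable {G α : Type*} [Group G] [MulAction G α] [Fintype α] [DecidableEq α]

instance : SMul G (Finpartition (univ : Finset α)) where
  smul g P := (P.map (OrderIso.smulFinset g)).copy smul_finset_univ

theorem parts_smul (g : G) (P : Finpartition (univ : Finset α)) :
    (g • P).parts = g • P.parts :=
  map_eq_image _ _

instance : MulAction G (Finpartition (univ : Finset α)) where
  one_smul P := Finpartition.ext (by rw [parts_smul, one_smul])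
  mul_smul g h P := Finpartition.ext (by simp only [parts_smul, mul_smul])

variable (G α) in
def cardPartsSubMulAction (k m : ℕ) : SubMulAction G (Finpartition (univ : Finset α)) where
  carrier := {P | #P.parts = k ∧ ∀ b ∈ P.parts, m ≤ #b}
  smul_mem' g P := by
    rintro ⟨hk, hm⟩
    refine ⟨by rw [parts_smul, card_smul_finset, hk], fun b hb => ?_⟩
    rw [parts_smul] at hb
    obtain ⟨c, hc, rfl⟩ := mem_smul_finset.1 hb
    rw [card_smul_finset]
    exact hm c hc

theorem eq_univ_or_card_le_card_parts_of_forall_smul_eq [Fact (Nat.card G).Prime]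
    [IsPretransitive G α] {P : Finpartition (univ : Finset α)} (hP : ∀ g : G, g • P = P)
    {b : Finset α} (hb : b ∈ P.parts) : b = univ ∨ Nat.card G ≤ #P.parts := by
  have smul_mem (g : G) : g • b ∈ P.parts := by
    rw [← hP g, parts_smul]
    exact smul_mem_smul_finset hb
  rcases (stabilizer G b).eq_bot_or_eq_top_of_prime_card with hbot | htop
  · right
    have hinj : Function.Injective fun g : G => (⟨g • b, smul_mem g⟩ : P.parts) := by
      intro g h hgh
      have hgh : g • b = h • b := congrArg Subtype.val hgh
      have hmem : h⁻¹ * g ∈ stabilizer G b := by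
        rw [mem_stabilizer_iff, mul_smul, hgh, inv_smul_smul]
      rw [hbot, Subgroup.mem_bot, inv_mul_eq_one] at hmem
      exact hmem.symm
    simpa using Nat.card_le_card_of_injective _ hinj
  · left
    obtain ⟨x, hx⟩ := P.nonempty_of_mem_parts hb
    refine eq_univ_of_forall fun y => ?_
    obtain ⟨g, rfl⟩ := exists_smul_eq G x y
    have hg : g • b = b := mem_stabilizer_iff.1 (htop ▸ Subgroup.mem_top g)
    exact hg ▸ smul_mem_smul_finset hx

theorem prime_dvd_card_cardPartsSubMulAction [Fact (Nat.card G).Prime]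
    [IsPretransitive G α] {k : ℕ} (m : ℕ) (hk1 : 1 < k) (hkG : k < Nat.card G) :
    Nat.card G ∣ Nat.card (cardPartsSubMulAction G α k m) := by
  have hfree : IsEmpty (fixedPoints G (cardPartsSubMulAction G α k m)) := by
    refine ⟨fun ⟨⟨P, hk, _⟩, hfix⟩ => ?_⟩
    have hP (g : G) : g • P = P := congrArg Subtype.val (hfix g)
    obtain ⟨b, hb⟩ := card_pos.1 (hk ▸ zero_lt_one.trans hk1)
    rcases eq_univ_or_card_le_card_parts_of_forall_smul_eq hP hb with rfl | hle
    · rw [parts_eq_singleton_of_mem hb, card_singleton] at hk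
      omega
    · omega
  have hG : IsPGroup (Nat.card G) G := IsPGroup.of_card (n := 1) (pow_one _).symm
  have hmod := hG.card_modEq_card_fixedPoints (cardPartsSubMulAction G α k m)
  rwa [Nat.card_of_isEmpty (α := fixedPoints G _), Nat.modEq_zero_iff_dvd] at hmod

end Finpartition

theorem prime_dvd_partD (p k : ℕ) (hp : p.Prime) (hk1 : 1 < k) (hkp : k < p) :
    p ∣ partD p k := by
  have : NeZero p := ⟨hp.ne_zero⟩
  have hcard : Nat.card (Multiplicative (Fin p)) = p := by simp
  have : Fact (Nat.card (Multiplicative (Fin p))).Prime := ⟨by rwa [hcard]⟩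
  have := Finpartition.prime_dvd_card_cardPartsSubMulAction (G := Multiplicative (Fin p))
    (α := Fin p) 2 hk1 (by rwa [hcard])
  rwa [hcard] at this
end
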